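/- Let φ be the standard normal density and define, for a > 0 and p ∈ [0,1], D(p,a) = sup_x |p·Φ(x−a) + (1−p)·Φ(x+a) − Φ_m(x)|, where Φ_m is the CDF of the moment-matched normal (mean (2p−1)a, variance 1+4p(1−p)a²). Then in the limit a → 0, the leading third-order coefficient of D in a is maximized over p at p = (3+√3)/6 (equivalently, at line ratio (3+√3):(3−√3)). -/

import Mathlib

open MeasureTheory Filter

/-- The standard normal cumulative distribution function. -/
noncomputable def stdNormalCDF (x : ℝ) : ℝ :=
  ∫ t in Set.Iic x, Real.exp (-t ^ 2 / 2) / Real.sqrt (2 * Real.pi)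

/-- Kolmogorov distance between the two-point mixture CDF (weights `p`, `1-p` at `±a`,
convolved with a unit Gaussian) and the moment-matched Gaussian CDF. -/
noncomputable def mixtureKSdist (p a : ℝ) : ℝ :=
  ⨆ x : ℝ, |p * stdNormalCDF (x - a) + (1 - p) * stdNormalCDF (x + a)
    - stdNormalCDF ((x - (2 * p - 1) * a) / Real.sqrt (1 + 4 * p * (1 - p) * a ^ 2))|

/-!
Write `b = 2p - 1`, `c = 4p(1 - p) = 1 - b²`, `u = x - ba`, `σ = √(1 + ca²)`, and split the
difference of the two CDFs into the shift part `pΦ(x - a) + (1 - p)Φ(x + a) - Φ(u)` and the scale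
part `Φ(u) - Φ(u / σ)`. All derivatives of `Φ` are bounded, so Taylor's inequality gives, uniformly
in `x`, the shift part as `-(ca²/2)·xφ(x) - (bca³/6)·(x² - 1)φ(x) + O(a⁴)`; and since
`1 - 1/σ = ca²/2 + O(a⁴)`, the scale part is `(ca²/2)·uφ(u) + O(a⁴)
= (ca²/2)·(xφ(x) + ba(x² - 1)φ(x)) + O(a⁴)`. The second-order terms cancel (this is the moment
matching), leaving `bc(x² - 1)φ(x)·a³/3 + O(a⁴)`. Since `|(x² - 1)φ(x)|` is largest at `x = 0`,
`D(p, a)/a³ → |b(1 - b²)|·φ(0)/3`, and `b - b³` is largest on `[-1, 1]` at `b = 1/√3`, that is at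
`p = (3 + √3)/6`.
-/

open Real Set Topology
open scoped Nat

theorem abs_sub_taylor_le {f : ℕ → ℝ → ℝ} {M y : ℝ} (n : ℕ)
    (hf : ∀ k ≤ n, ∀ t, HasDerivAt (f k) (f (k + 1) t) t) {z : ℝ}
    (hM : ∀ t ∈ uIcc y z, |f (n + 1) t| ≤ M) :
    |f 0 z - ∑ k ∈ Finset.range (n + 1), f k y * (z - y) ^ k / k !| ≤ M * |z - y| ^ (n + 1) := by
  induction n generalizing f z with
  | zero =>
    have := (convex_uIcc y z).norm_image_sub_le_of_norm_hasDerivWithin_le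
      (fun t _ => (hf 0 le_rfl t).hasDerivWithinAt) hM left_mem_uIcc right_mem_uIcc
    simpa using this
  | succ n ih =>
    set T : ℝ → ℝ := fun w => ∑ k ∈ Finset.range (n + 2), f k y * (w - y) ^ k / k ! with hT
    set P : ℝ → ℝ := fun w => ∑ k ∈ Finset.range (n + 1), f (k + 1) y * (w - y) ^ k / k ! with hP
    have hT_center : T y = f 0 y := by simp [hT, Finset.sum_range_succ']
    have hT_deriv (w : ℝ) : HasDerivAt T (P w) w := by
      simp only [hT, hP, Finset.sum_range_succ' _ (n + 1), pow_zero, Nat.factorial_zero,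
        Nat.cast_one, div_one, mul_one]
      refine HasDerivAt.add_const _ (HasDerivAt.fun_sum
        (A := fun k w => f (k + 1) y * (w - y) ^ (k + 1) / ((k + 1) ! : ℝ)) fun k _ => ?_)
      refine ((((hasDerivAt_id' w).sub_const y).fun_pow (k + 1)).const_mul (f (k + 1) y)
        |>.div_const ((k + 1) ! : ℝ)).congr_deriv ?_
      rw [Nat.add_sub_cancel, Nat.factorial_succ]
      push_cast
      field_simp
    have hM0 : 0 ≤ M := (abs_nonneg _).trans (hM _ left_mem_uIcc)
    -- The derivative of the remainder of `f` is the remainder of `fun k => f (k + 1)`.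
    have hR' : ∀ w ∈ uIcc y z, ‖f 1 w - P w‖ ≤ M * |z - y| ^ (n + 1) := fun w hw =>
      (ih (f := fun k => f (k + 1)) (fun k hk => hf (k + 1) (by omega))
        fun t ht => hM t (uIcc_subset_uIcc left_mem_uIcc hw ht)).trans
        (mul_le_mul_of_nonneg_left (pow_le_pow_left₀ (abs_nonneg _)
          (abs_sub_left_of_mem_uIcc hw) _) hM0)
    have := (convex_uIcc y z).norm_image_sub_le_of_norm_hasDerivWithin_le
      (fun t _ => ((hf 0 (by omega) t).sub (hT_deriv t)).hasDerivWithinAt) hR'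
      left_mem_uIcc right_mem_uIcc
    rw [Pi.sub_apply, Pi.sub_apply, hT_center, sub_self, sub_zero, Real.norm_eq_abs,
      Real.norm_eq_abs, mul_assoc, ← pow_succ] at this
    exact this

theorem abs_iSup_abs_sub_le {ι : Type*} {f g : ι → ℝ} {E : ℝ} (hfg : ∀ i, |f i - g i| ≤ E)
    {i₀ : ι} (hg : ∀ i, |g i| ≤ |g i₀|) : |(⨆ i, |f i|) - (|g i₀|)| ≤ E := by
  have hup : ∀ i, |f i| ≤ |g i₀| + E := fun i => by
    linarith [abs_sub_abs_le_abs_sub (f i) (g i), hfg i, hg i]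
  have hbdd : BddAbove (range fun i => |f i|) := ⟨_, forall_mem_range.2 hup⟩
  have hlow : |g i₀| - E ≤ |f i₀| := by
    linarith [abs_sub_abs_le_abs_sub (g i₀) (f i₀), abs_sub_comm (g i₀) (f i₀), hfg i₀]
  have : Nonempty ι := ⟨i₀⟩
  rw [abs_le]
  constructor
  · linarith [le_ciSup hbdd i₀]
  · linarith [ciSup_le hup]

theorem tendsto_div_pow_of_abs_sub_le {g : ℝ → ℝ} {κ K : ℝ} {n : ℕ}
    (h : ∀ a ∈ Ioo (0 : ℝ) 1, |g a - κ * a ^ n| ≤ K * a ^ (n + 1)) :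
    Tendsto (fun a => g a / a ^ n) (𝓝[>] 0) (𝓝 κ) := by
  have hK : Tendsto (fun a : ℝ => K * a) (𝓝[>] 0) (𝓝 0) := by
    simpa using ((continuous_const_mul K).tendsto 0).mono_left nhdsWithin_le_nhds
  refine tendsto_iff_norm_sub_tendsto_zero.2 (squeeze_zero_norm' ?_ hK)
  filter_upwards [Ioo_mem_nhdsGT (zero_lt_one' ℝ)] with a ha
  have han : 0 < a ^ n := pow_pos ha.1 n
  rw [norm_norm, Real.norm_eq_abs, ← mul_div_cancel_right₀ κ han.ne', ← sub_div, abs_div,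
    abs_of_pos han, div_le_iff₀ han, mul_assoc, ← pow_succ']
  exact h a ha

theorem one_sub_inv_mem_Icc {σ : ℝ} (hσ : 1 ≤ σ) : 1 - σ⁻¹ ∈ Icc 0 ((σ ^ 2 - 1) / 2) := by
  have hinv : σ * σ⁻¹ = 1 := mul_inv_cancel₀ (by positivity)
  have hinv_le : σ⁻¹ ≤ 1 := inv_le_one_of_one_le₀ hσ
  have hinv_pos : 0 < σ⁻¹ := by positivity
  constructor <;> nlinarith

theorem abs_one_sub_inv_sub_le {σ : ℝ} (hσ : 1 ≤ σ) :
    |1 - σ⁻¹ - (σ ^ 2 - 1) / 2| ≤ (σ ^ 2 - 1) ^ 2 := by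
  have hσ0 : 0 < σ := by linarith
  have key : 1 - σ⁻¹ - (σ ^ 2 - 1) / 2 = -((σ - 1) ^ 2 * (σ + 2) / (2 * σ)) := by
    field_simp
    ring
  rw [key, abs_neg, abs_of_nonneg (by positivity), div_le_iff₀ (by positivity)]
  have : (σ + 2) ≤ (σ + 1) ^ 2 * (2 * σ) := by nlinarith
  nlinarith [mul_le_mul_of_nonneg_left this (sq_nonneg (σ - 1))]

theorem abs_mul_one_sub_sq_le {b : ℝ} (hb : b ^ 2 ≤ 4 / 3) : |b * (1 - b ^ 2)| ≤ 2 * √3 / 9 := by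
  refine abs_le_of_sq_le_sq ?_ (by positivity)
  have h3 : √3 ^ 2 = 3 := sq_sqrt (by norm_num)
  nlinarith [mul_nonneg (sq_nonneg (b ^ 2 - 1 / 3)) (sub_nonneg.2 hb)]

noncomputable def stdNormalPDF (t : ℝ) : ℝ := exp (-t ^ 2 / 2) / √(2 * π)

theorem stdNormalPDF_pos (t : ℝ) : 0 < stdNormalPDF t := by unfold stdNormalPDF; positivity

theorem continuous_stdNormalPDF : Continuous stdNormalPDF := by unfold stdNormalPDF; fun_prop

theorem integrable_stdNormalPDF : Integrable stdNormalPDF := by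
  have h := (integrable_exp_neg_mul_sq (b := 1 / 2) (by norm_num)).div_const √(2 * π)
  refine h.congr (ae_of_all _ fun t => ?_)
  simp only [stdNormalPDF]
  ring_nf

theorem hasDerivAt_stdNormalCDF (x : ℝ) : HasDerivAt stdNormalCDF (stdNormalPDF x) x := by
  have hftc := intervalIntegral.integral_hasDerivAt_right integrable_stdNormalPDF.intervalIntegrable
    (continuous_stdNormalPDF.stronglyMeasurableAtFilter _ _) continuous_stdNormalPDF.continuousAt
      (a := 0) (b := x)
  refine (hftc.const_add (stdNormalCDF 0)).congr_of_eventuallyEq (.of_forall fun y => ?_)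
  have := intervalIntegral.integral_Iic_sub_Iic (a := 0) (b := y)
    integrable_stdNormalPDF.integrableOn integrable_stdNormalPDF.integrableOn
  simp only [stdNormalCDF, stdNormalPDF] at this ⊢
  linarith

theorem hasDerivAt_stdNormalPDF (t : ℝ) : HasDerivAt stdNormalPDF (-t * stdNormalPDF t) t := by
  have h := ((hasDerivAt_pow 2 t).neg.div_const 2).exp.div_const √(2 * π)
  refine h.congr_deriv ?_
  simp only [Pi.neg_apply, stdNormalPDF]
  norm_num
  ring

theorem stdNormalPDF_eq_div_exp (t : ℝ) : stdNormalPDF t = stdNormalPDF 0 / exp (t ^ 2 / 2) := by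
  simp only [stdNormalPDF, neg_div, exp_neg]
  norm_num
  ring

theorem stdNormalPDF_zero_le : stdNormalPDF 0 ≤ 1 / 2 := by
  have h : (2 : ℝ) ≤ √(2 * π) := le_sqrt_of_sq_le (by nlinarith [pi_gt_three])
  simp only [stdNormalPDF]
  rw [show -(0 : ℝ) ^ 2 / 2 = 0 by norm_num, exp_zero]
  exact one_div_le_one_div_of_le (by norm_num) h

theorem abs_pow_mul_stdNormalPDF_le (t : ℝ) {k : ℕ} (hk : k ≤ 4) :
    |t| ^ k * stdNormalPDF t ≤ 4 := by
  have hpow : |t| ^ k ≤ 1 + t ^ 4 := by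
    rcases le_or_gt |t| 1 with h | h
    · nlinarith [pow_le_one₀ (abs_nonneg t) h (n := k), pow_nonneg (sq_nonneg t) 2]
    · calc |t| ^ k ≤ |t| ^ 4 := pow_le_pow_right₀ h.le hk
        _ ≤ 1 + t ^ 4 := by rw [pow_abs, abs_of_nonneg (by positivity)]; linarith
  have hexp : 1 + t ^ 4 ≤ 8 * exp (t ^ 2 / 2) := by
    nlinarith [quadratic_le_exp_of_nonneg (x := t ^ 2 / 2) (by positivity), sq_nonneg t]
  rw [stdNormalPDF_eq_div_exp, mul_div_assoc', div_le_iff₀ (exp_pos _)]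
  nlinarith [stdNormalPDF_zero_le, stdNormalPDF_pos 0, exp_pos (t ^ 2 / 2)]

theorem abs_sq_sub_one_mul_stdNormalPDF_le (t : ℝ) :
    |(t ^ 2 - 1) * stdNormalPDF t| ≤ stdNormalPDF 0 := by
  have hexp : |t ^ 2 - 1| ≤ exp (t ^ 2 / 2) := by
    have := quadratic_le_exp_of_nonneg (x := t ^ 2 / 2) (by positivity)
    rw [abs_le]; constructor <;> nlinarith [sq_nonneg t, sq_nonneg (t ^ 2 - 2)]
  rw [abs_mul, abs_of_pos (stdNormalPDF_pos t), stdNormalPDF_eq_div_exp, mul_div_assoc',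
    div_le_iff₀ (exp_pos _)]
  nlinarith [stdNormalPDF_pos 0]

/-- The `k`-th derivative of `stdNormalCDF` for `k ≤ 4` (junk for `k ≥ 5`). -/
noncomputable def stdNormalDeriv : ℕ → ℝ → ℝ
  | 0 => stdNormalCDF
  | 1 => stdNormalPDF
  | 2 => fun t => -t * stdNormalPDF t
  | 3 => fun t => (t ^ 2 - 1) * stdNormalPDF t
  | _ => fun t => (3 * t - t ^ 3) * stdNormalPDF t

theorem hasDerivAt_stdNormalDeriv {k : ℕ} (hk : k ≤ 3) (t : ℝ) :
    HasDerivAt (stdNormalDeriv k) (stdNormalDeriv (k + 1) t) t := by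
  interval_cases k
  · exact hasDerivAt_stdNormalCDF t
  · exact hasDerivAt_stdNormalPDF t
  · exact ((hasDerivAt_neg t).mul (hasDerivAt_stdNormalPDF t)).congr_deriv (by
      simp only [stdNormalDeriv]; ring)
  · exact (((hasDerivAt_pow 2 t).sub_const 1).mul (hasDerivAt_stdNormalPDF t)).congr_deriv (by
      simp only [stdNormalDeriv]; push_cast; ring)

theorem abs_stdNormalDeriv_four_le (t : ℝ) : |stdNormalDeriv 4 t| ≤ 16 := by
  have h1 := abs_pow_mul_stdNormalPDF_le t (k := 1) (by norm_num)
  have h3 := abs_pow_mul_stdNormalPDF_le t (k := 3) (by norm_num)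
  have hφ := (stdNormalPDF_pos t).le
  simp only [stdNormalDeriv, abs_mul, abs_of_pos (stdNormalPDF_pos t)]
  calc |3 * t - t ^ 3| * stdNormalPDF t ≤ (3 * |t| ^ 1 + |t| ^ 3) * stdNormalPDF t := by
        gcongr
        calc |3 * t - t ^ 3| ≤ |3 * t| + |t ^ 3| := abs_sub _ _
          _ = 3 * |t| ^ 1 + |t| ^ 3 := by rw [abs_mul, abs_pow, abs_of_pos three_pos, pow_one]
    _ ≤ 16 := by nlinarith

theorem abs_stdNormalCDF_add_sub_taylor_le (x h : ℝ) :
    |stdNormalCDF (x + h) - (stdNormalCDF x + stdNormalPDF x * h - x * stdNormalPDF x * h ^ 2 / 2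
      + (x ^ 2 - 1) * stdNormalPDF x * h ^ 3 / 6)| ≤ 16 * h ^ 4 := by
  have := abs_sub_taylor_le 3 (f := stdNormalDeriv) (fun k hk => hasDerivAt_stdNormalDeriv hk)
    (y := x) (z := x + h) fun t _ => abs_stdNormalDeriv_four_le t
  simp only [Finset.sum_range_succ, Finset.sum_range_zero, stdNormalDeriv, add_sub_cancel_left,
    Nat.factorial, Nat.succ_eq_add_one, Nat.reduceAdd, Nat.reduceMul, Nat.cast_ofNat] at this
  convert this using 2
  · ring
  · rw [Even.pow_abs ⟨2, rfl⟩]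

theorem abs_mul_stdNormalPDF_add_sub_le (x h : ℝ) :
    |(x + h) * stdNormalPDF (x + h) - (x * stdNormalPDF x - (x ^ 2 - 1) * stdNormalPDF x * h)|
      ≤ 16 * h ^ 2 := by
  have := abs_sub_taylor_le 1 (f := fun k => stdNormalDeriv (k + 2))
    (fun k hk => hasDerivAt_stdNormalDeriv (by omega)) (y := x) (z := x + h)
    fun t _ => abs_stdNormalDeriv_four_le t
  simp only [Finset.sum_range_succ, Finset.sum_range_zero, stdNormalDeriv, add_sub_cancel_left,
    Nat.factorial, Nat.succ_eq_add_one, Nat.reduceAdd, Nat.reduceMul] at this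
  convert this using 1
  · rw [← abs_neg]; congr 1; ring
  · rw [sq_abs]

theorem abs_stdNormalCDF_mul_sub_le {s : ℝ} (hs : s ∈ Icc (1 / 2 : ℝ) 1) (u : ℝ) :
    |stdNormalCDF (s * u) - (stdNormalCDF u + (s - 1) * (u * stdNormalPDF u))|
      ≤ 16 * (s - 1) ^ 2 := by
  have hderiv (k : ℕ) (hk : k ≤ 1) (τ : ℝ) : HasDerivAt (fun τ => u ^ k * stdNormalDeriv k (τ * u))
      (u ^ (k + 1) * stdNormalDeriv (k + 1) (τ * u)) τ :=
    (((hasDerivAt_stdNormalDeriv (by omega) (τ * u)).comp τ (hasDerivAt_mul_const u)).const_mul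
      (u ^ k)).congr_deriv (by ring)
  have hbound : ∀ τ ∈ uIcc 1 s, |u ^ 2 * stdNormalDeriv 2 (τ * u)| ≤ 16 := by
    intro τ hτ
    rw [uIcc_of_ge hs.2] at hτ
    have hτ0 : 0 < τ := by linarith [hs.1, hτ.1]
    have h3 := abs_pow_mul_stdNormalPDF_le (τ * u) (k := 3) (by norm_num)
    have hφ := (stdNormalPDF_pos (τ * u)).le
    simp only [stdNormalDeriv, abs_mul, abs_neg, abs_of_pos hτ0, abs_of_pos (stdNormalPDF_pos _),
      mul_pow, abs_pow] at h3 ⊢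
    have hτ2 : 1 / 4 ≤ τ ^ 2 := by nlinarith [hs.1, hτ.1]
    have key : τ ^ 2 * (|u| ^ 2 * (τ * |u| * stdNormalPDF (τ * u)))
        = τ ^ 3 * |u| ^ 3 * stdNormalPDF (τ * u) := by ring
    nlinarith [mul_nonneg (mul_nonneg (sq_nonneg |u|) (abs_nonneg u)) (mul_nonneg hτ0.le hφ)]
  have := abs_sub_taylor_le 1 hderiv hbound
  simp only [Finset.sum_range_succ, Finset.sum_range_zero, stdNormalDeriv, Nat.factorial,
    Nat.succ_eq_add_one, Nat.reduceAdd, one_mul] at this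
  convert this using 2
  · ring
  · rw [sq_abs]

theorem abs_shiftPart_sub_le {p : ℝ} (hp : p ∈ Icc (0 : ℝ) 1) (x a : ℝ) :
    |p * stdNormalCDF (x - a) + (1 - p) * stdNormalCDF (x + a) - stdNormalCDF (x - (2 * p - 1) * a)
      - (-(4 * p * (1 - p)) * a ^ 2 / 2 * (x * stdNormalPDF x)
        - (2 * p - 1) * (4 * p * (1 - p)) * a ^ 3 / 6 * ((x ^ 2 - 1) * stdNormalPDF x))|
      ≤ 32 * a ^ 4 := by
  obtain ⟨hp0, hp1⟩ := hp
  have h1 := abs_le.mp (abs_stdNormalCDF_add_sub_taylor_le x (-a))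
  have h2 := abs_le.mp (abs_stdNormalCDF_add_sub_taylor_le x a)
  have h3 := abs_le.mp (abs_stdNormalCDF_add_sub_taylor_le x (-((2 * p - 1) * a)))
  rw [← sub_eq_add_neg] at h1 h3
  have hb4 : ((2 * p - 1) * a) ^ 4 ≤ a ^ 4 := by
    have hb2 : (2 * p - 1) ^ 2 ≤ 1 := by nlinarith
    calc ((2 * p - 1) * a) ^ 4 = ((2 * p - 1) ^ 2) ^ 2 * a ^ 4 := by ring
      _ ≤ 1 * a ^ 4 := by gcongr; exact pow_le_one₀ (sq_nonneg _) hb2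
      _ = a ^ 4 := one_mul _
  rw [abs_le]
  constructor <;> nlinarith [mul_le_mul_of_nonneg_left h1.1 hp0,
    mul_le_mul_of_nonneg_left h1.2 hp0, mul_le_mul_of_nonneg_left h2.1 (sub_nonneg.2 hp1),
    mul_le_mul_of_nonneg_left h2.2 (sub_nonneg.2 hp1)]

theorem abs_mixtureCDF_sub_cubic_le {p a : ℝ} (hp : p ∈ Icc (0 : ℝ) 1) (ha : a ∈ Icc (0 : ℝ) 1)
    (x : ℝ) :
    |p * stdNormalCDF (x - a) + (1 - p) * stdNormalCDF (x + a)
      - stdNormalCDF ((x - (2 * p - 1) * a) / √(1 + 4 * p * (1 - p) * a ^ 2))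
      - (2 * p - 1) * (4 * p * (1 - p)) * ((x ^ 2 - 1) * stdNormalPDF x) / 3 * a ^ 3|
      ≤ 49 * a ^ 4 := by
  obtain ⟨hp0, hp1⟩ := hp
  obtain ⟨ha0, ha1⟩ := ha
  have hG := abs_le.mp (abs_shiftPart_sub_le ⟨hp0, hp1⟩ x a)
  have hΨ := abs_mul_stdNormalPDF_add_sub_le x (-((2 * p - 1) * a))
  rw [← sub_eq_add_neg] at hΨ
  set b := 2 * p - 1
  set c := 4 * p * (1 - p)
  set u := x - b * a
  have hb2 : b ^ 2 ≤ 1 := by nlinarith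
  have hc0 : 0 ≤ c := by positivity
  have hε1 : c * a ^ 2 ≤ a ^ 2 := by nlinarith [sq_nonneg a]
  have ha2 : a ^ 2 ≤ 1 := pow_le_one₀ ha0 ha1
  set σ := √(1 + c * a ^ 2)
  have hσsq : σ ^ 2 = 1 + c * a ^ 2 := sq_sqrt (by positivity)
  have hσ1 : 1 ≤ σ := one_le_sqrt.mpr (by nlinarith)
  have hs : σ⁻¹ ∈ Icc (1 / 2 : ℝ) 1 :=
    ⟨by rw [one_div]; exact inv_anti₀ (by linarith) (by nlinarith), inv_le_one_of_one_le₀ hσ1⟩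
  have hS := abs_le.mp (abs_stdNormalCDF_mul_sub_le hs u)
  have hD1 := one_sub_inv_mem_Icc hσ1
  have hD2 := abs_one_sub_inv_sub_le hσ1
  rw [hσsq, add_sub_cancel_left] at hD1 hD2
  have hxφ : |x * stdNormalPDF x| ≤ 4 := by
    simpa [abs_mul, abs_of_pos (stdNormalPDF_pos x)] using
      abs_pow_mul_stdNormalPDF_le x (k := 1) (by norm_num)
  have hx3 := (abs_sq_sub_one_mul_stdNormalPDF_le x).trans stdNormalPDF_zero_le
  have hba : |b * a| ≤ 1 := by
    rw [abs_le]; constructor <;> nlinarith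
  have hw : |x * stdNormalPDF x - (x ^ 2 - 1) * stdNormalPDF x * -(b * a)| ≤ 9 / 2 := by
    calc _ ≤ |x * stdNormalPDF x| + |(x ^ 2 - 1) * stdNormalPDF x| * |b * a| := by
          rw [← abs_neg (b * a), ← abs_mul]; exact abs_sub _ _
      _ ≤ 4 + 1 / 2 * 1 := by gcongr
      _ = 9 / 2 := by norm_num
  have hca4 : (c * a ^ 2) ^ 2 ≤ a ^ 4 := by
    nlinarith [pow_le_pow_left₀ (by positivity) hε1 2]
  have hdw : |(1 - σ⁻¹ - c * a ^ 2 / 2)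
      * (x * stdNormalPDF x - (x ^ 2 - 1) * stdNormalPDF x * -(b * a))| ≤ a ^ 4 * (9 / 2) := by
    rw [abs_mul]
    exact mul_le_mul (hD2.trans hca4) hw (abs_nonneg _) (by positivity)
  have hr : |(1 - σ⁻¹) * (u * stdNormalPDF u
      - (x * stdNormalPDF x - (x ^ 2 - 1) * stdNormalPDF x * -(b * a)))|
      ≤ a ^ 2 / 2 * (16 * a ^ 2) := by
    rw [abs_mul, abs_of_nonneg hD1.1]
    refine mul_le_mul (hD1.2.trans (by linarith)) (hΨ.trans ?_) (abs_nonneg _) (by positivity)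
    rw [neg_sq, mul_pow]
    linarith [mul_le_of_le_one_left (sq_nonneg a) hb2]
  have hE : 16 * (σ⁻¹ - 1) ^ 2 ≤ 4 * a ^ 4 :=
    calc 16 * (σ⁻¹ - 1) ^ 2 = 16 * (1 - σ⁻¹) ^ 2 := by ring
      _ ≤ 16 * (a ^ 2 / 2) ^ 2 := by gcongr; exacts [hD1.1, hD1.2.trans (by linarith)]
      _ = 4 * a ^ 4 := by ring
  -- The difference to bound is (shift error) - (scale error) + `(1 - σ⁻¹ - ca²/2) * w`
  -- + `(1 - σ⁻¹) * (uφ(u) - w)`, where `w = xφ(x) + ba(x² - 1)φ(x)`.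
  rw [div_eq_inv_mul, abs_le]
  constructor <;> linarith [abs_le.mp hdw, abs_le.mp hr]

noncomputable def mixtureKSCubicCoeff (p : ℝ) : ℝ :=
  |(2 * p - 1) * (4 * p * (1 - p))| * stdNormalPDF 0 / 3

theorem abs_mixtureKSdist_sub_cubic_le {p a : ℝ} (hp : p ∈ Icc (0 : ℝ) 1) (ha : a ∈ Ioo (0 : ℝ) 1) :
    |mixtureKSdist p a - mixtureKSCubicCoeff p * a ^ 3| ≤ 49 * a ^ (3 + 1) := by
  set g : ℝ → ℝ := fun x =>
    (2 * p - 1) * (4 * p * (1 - p)) * ((x ^ 2 - 1) * stdNormalPDF x) / 3 * a ^ 3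
  have ha3 : 0 ≤ a ^ 3 := pow_nonneg ha.1.le 3
  have hg (x : ℝ) : |g x| = |(2 * p - 1) * (4 * p * (1 - p))| * |(x ^ 2 - 1) * stdNormalPDF x| / 3
      * a ^ 3 := by
    rw [abs_mul, abs_div, abs_mul, abs_of_nonneg ha3, abs_of_pos (three_pos : (0 : ℝ) < 3)]
  have hg0 : |g 0| = mixtureKSCubicCoeff p * a ^ 3 := by
    rw [hg, mixtureKSCubicCoeff]
    norm_num [abs_of_pos (stdNormalPDF_pos 0)]
  rw [← hg0]
  refine abs_iSup_abs_sub_le (fun x => abs_mixtureCDF_sub_cubic_le hp ⟨ha.1.le, ha.2.le⟩ x) ?_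
  intro x
  rw [hg, hg0, mixtureKSCubicCoeff]
  gcongr
  exact abs_sq_sub_one_mul_stdNormalPDF_le x

theorem mixtureKSCubicCoeff_le {p : ℝ} (hp : p ∈ Icc (0 : ℝ) 1) :
    mixtureKSCubicCoeff p ≤ mixtureKSCubicCoeff ((3 + √3) / 6) := by
  have h3 : √3 ^ 2 = 3 := sq_sqrt (by norm_num)
  have hworst : (2 * ((3 + √3) / 6) - 1) * (4 * ((3 + √3) / 6) * (1 - (3 + √3) / 6))
      = 2 * √3 / 9 := by
    linear_combination (-√3 / 27) * h3
  have hb : (2 * p - 1) ^ 2 ≤ 4 / 3 := by nlinarith [hp.1, hp.2]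
  unfold mixtureKSCubicCoeff
  rw [hworst, abs_of_pos (by positivity : (0 : ℝ) < 2 * √3 / 9)]
  have := (stdNormalPDF_pos 0).le
  gcongr
  calc |(2 * p - 1) * (4 * p * (1 - p))| = |(2 * p - 1) * (1 - (2 * p - 1) ^ 2)| := by
        rw [show 4 * p * (1 - p) = 1 - (2 * p - 1) ^ 2 by ring]
    _ ≤ 2 * √3 / 9 := abs_mul_one_sub_sq_le hb

theorem worst_case_line_ratio :
    ∃ c : ℝ → ℝ,
      (∀ p ∈ Set.Icc (0 : ℝ) 1,
        Tendsto (fun a : ℝ => mixtureKSdist p a / a ^ 3)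
          (nhdsWithin 0 (Set.Ioi 0)) (nhds (c p))) ∧
      ∀ p ∈ Set.Icc (0 : ℝ) 1, c p ≤ c ((3 + Real.sqrt 3) / 6) :=
  ⟨mixtureKSCubicCoeff,
    fun _ hp => tendsto_div_pow_of_abs_sub_le fun _ ha => abs_mixtureKSdist_sub_cubic_le hp ha,
    fun _ hp => mixtureKSCubicCoeff_le hp⟩
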